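/- For coprime positive integers n, m, the enveloping group of the quandle U(n,m) is isomorphic to ℤ × ℤ. -/

import Mathlib

open Quandles

/-- The underlying set of the quandle `U(n,m)`: elements `x_i` (`i ∈ ZMod n`)
and `y_r` (`r ∈ ZMod m`). -/
def UQ (n m : ℕ) : Type := ZMod n ⊕ ZMod m

namespace UQ

/-- The quandle operation of `U(n,m)` (as the inverse action `z ◃⁻¹ w = w * z` of the paper):
`x_i * x_j = x_i`, `x_i * y_r = x_{i+1}`, `y_r * y_s = y_r`, `y_r * x_i = y_{r+1}`. -/
def op {n m : ℕ} (x y : UQ n m) : UQ n m :=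
  match x, y with
  | Sum.inl _, Sum.inl i => Sum.inl i
  | Sum.inl _, Sum.inr r => Sum.inr (r + 1)
  | Sum.inr _, Sum.inl i => Sum.inl (i + 1)
  | Sum.inr _, Sum.inr r => Sum.inr r

/-- The inverse operation. -/
def opInv {n m : ℕ} (x y : UQ n m) : UQ n m :=
  match x, y with
  | Sum.inl _, Sum.inl i => Sum.inl i
  | Sum.inl _, Sum.inr r => Sum.inr (r - 1)
  | Sum.inr _, Sum.inl i => Sum.inl (i - 1)
  | Sum.inr _, Sum.inr r => Sum.inr r

instance quandle (n m : ℕ) : Quandle (UQ n m) where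
  act := opInv
  invAct := op
  self_distrib := by
    rintro (a | a) (b | b) (c | c) <;> simp [op, opInv] <;> rfl
  left_inv := by
    rintro (a | a) (b | b) <;> simp [op, opInv] <;> rfl
  right_inv := by
    rintro (a | a) (b | b) <;> simp [op, opInv] <;> rfl
  fix := by
    rintro (a | a) <;> simp [op, opInv] <;> rfl

end UQ

/-!
Conjugating `x_i` by any `y_s` gives `x_{i+1}`, and conjugating `y_r` by any `x_j` gives `y_{r+1}`.
Hence `x_i ^ m` commutes with every `y_r`, and `y_r ^ n` with every `x_i`. For `a = x_i`, `b = y_r`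
the commutator `c = a⁻¹ b⁻¹ a b = x_i⁻¹ x_{i+1}` commutes with `a`, and comparing
`b⁻¹ a ^ m b = a ^ m` with `(b⁻¹ a b) ^ m = a ^ m c ^ m` gives `c ^ m = 1`; symmetrically `c ^ n = 1`,
so `c = 1` by coprimality. Then all `x_i` coincide, all `y_r` coincide, the two commute, and the
enveloping group is free abelian on them.
-/

open Rack

section Group

variable {G : Type*} [Group G]

theorem inv_mul_pow_eq_one_of_semiconjBy {a a' b : G} {k : ℕ} (hab : SemiconjBy b a' a)
    (ha : Commute a a') (hb : Commute b (a ^ k)) : (a⁻¹ * a') ^ k = 1 := by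
  have hpow : a' ^ k = a ^ k := mul_left_cancel ((hab.pow_right k).eq.trans hb.eq.symm)
  rw [ha.inv_left.mul_pow, hpow, inv_pow, inv_mul_cancel]

theorem commute_of_semiconjBy_of_coprime {n m : ℕ} (h : n.Coprime m) {a a' b b' : G}
    (hab : SemiconjBy b a' a) (hba : SemiconjBy a b' b) (ha : Commute a a') (hb : Commute b b')
    (ham : Commute b (a ^ m)) (hbn : Commute a (b ^ n)) : Commute a b := by
  have hm : (a⁻¹ * a') ^ m = 1 := inv_mul_pow_eq_one_of_semiconjBy hab ha ham
  have hn : (b⁻¹ * b') ^ n = 1 := inv_mul_pow_eq_one_of_semiconjBy hba hb hbn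
  have hinv : b⁻¹ * b' = (a⁻¹ * a')⁻¹ := by
    rw [eq_inv_mul_of_mul_eq hab.eq, eq_inv_mul_of_mul_eq hba.eq]
    group
  rw [hinv, inv_pow, inv_eq_one] at hn
  have hc : a⁻¹ * a' = 1 := by
    simpa [h.gcd_eq_one] using pow_gcd_eq_one.mpr ⟨hn, hm⟩
  rw [inv_mul_eq_one] at hc
  subst hc
  exact hab.symm

theorem commute_pow_of_semiconjBy_add_one {m : ℕ} {f : ZMod m → G} {g : G}
    (hf : ∀ r, SemiconjBy g (f (r + 1)) (f r)) (r : ZMod m) : Commute (g ^ m) (f r) := by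
  have key : ∀ k : ℕ, SemiconjBy (g ^ k) (f (r + k)) (f r) := by
    intro k
    induction k with
    | zero => simp
    | succ k ih =>
      rw [pow_succ, Nat.cast_succ, ← add_assoc]
      exact ih.mul_left (hf _)
  have hm := key m
  rwa [ZMod.natCast_self, add_zero] at hm

end Group

theorem ShelfHom.semiconjBy_map_act {R G : Type*} [Rack R] [Group G]
    (f : R →◃ Quandle.Conj G) (x y : R) : SemiconjBy (f x) (f y) (f (x ◃ y)) := by
  rw [SemiconjBy, ShelfHom.map_act, Quandle.conj_act_eq_conj, inv_mul_cancel_right]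

@[simp]
theorem Rack.toEnvelGroup.map_apply_toEnvelGroup {R G : Type*} [Rack R] [Group G]
    (f : R →◃ Quandle.Conj G) (x : R) : toEnvelGroup.map f (toEnvelGroup R x) = f x :=
  rfl

theorem ZMod.apply_eq_apply_zero_of_add_one {α : Type*} {n : ℕ} {f : ZMod n → α}
    (hf : ∀ i, f (i + 1) = f i) (i : ZMod n) : f i = f 0 := by
  obtain ⟨k, rfl⟩ := ZMod.intCast_surjective i
  simpa using Function.Periodic.int_mul_eq hf k

namespace UQ

variable {n m : ℕ}

/- A bare `Sum.inl i` has type `ZMod n ⊕ ZMod m`, not `UQ n m`, and `simp` then fails to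
typecheck terms like `φ (Sum.inl i)`; these constructors carry the right type. -/
def x (i : ZMod n) : UQ n m := Sum.inl i

def y (r : ZMod m) : UQ n m := Sum.inr r

def swap : UQ m n →◃ UQ n m where
  toFun := Sum.swap
  map_act' := by rintro (_ | _) (_ | _) <;> rfl

theorem envelGroup_hom_ext {G : Type*} [Group G] {f g : EnvelGroup (UQ n m) →* G}
    (hx : ∀ i, f (toEnvelGroup _ (x i)) = g (toEnvelGroup _ (x i)))
    (hy : ∀ r, f (toEnvelGroup _ (y r)) = g (toEnvelGroup _ (y r))) : f = g :=
  toEnvelGroup.map.symm.injective <| DFunLike.ext _ _ <| by rintro (i | r); exacts [hx i, hy r]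

section

variable {G : Type*} [Group G] (φ : UQ n m →◃ Quandle.Conj G)

theorem semiconjBy_map_y_x (r : ZMod m) (i : ZMod n) :
    SemiconjBy (φ (y r)) (φ (x (i + 1))) (φ (x i)) := by
  have hact : y r ◃ x (i + 1) = (x i : UQ n m) := congrArg Sum.inl (add_sub_cancel_right i 1)
  simpa only [hact] using φ.semiconjBy_map_act (y r) (x (i + 1))

theorem commute_map_x_x (i j : ZMod n) : Commute (φ (x i)) (φ (x j)) :=
  φ.semiconjBy_map_act (x i) (x j)

theorem commute_map_x_pow_y (i : ZMod n) (r : ZMod m) : Commute (φ (x i)) (φ (y r) ^ n) :=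
  (commute_pow_of_semiconjBy_add_one (f := fun j => φ (x j)) (semiconjBy_map_y_x φ r) i).symm

theorem commute_map_x_y (h : n.Coprime m) (i : ZMod n) (r : ZMod m) :
    Commute (φ (x i)) (φ (y r)) :=
  commute_of_semiconjBy_of_coprime h (semiconjBy_map_y_x φ r i)
    (semiconjBy_map_y_x (φ.comp swap) i r) (commute_map_x_x φ i (i + 1))
    (commute_map_x_x (φ.comp swap) r (r + 1)) (commute_map_x_pow_y (φ.comp swap) r i)
    (commute_map_x_pow_y φ i r)

theorem map_x_eq (h : n.Coprime m) (i : ZMod n) : φ (x i) = φ (x 0) := by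
  refine ZMod.apply_eq_apply_zero_of_add_one (f := fun j => φ (x j)) (fun j => ?_) i
  exact mul_right_cancel
    ((commute_map_x_y φ h (j + 1) 0).symm.eq.symm.trans (semiconjBy_map_y_x φ 0 j).eq)

theorem map_y_eq (h : n.Coprime m) (r : ZMod m) : φ (y r) = φ (y 0) :=
  map_x_eq (φ.comp swap) h.symm r

end

def degree : UQ n m →◃ Quandle.Conj (Multiplicative ℤ × Multiplicative ℤ) where
  toFun := Sum.elim (fun _ => (.ofAdd 1, 1)) (fun _ => (1, .ofAdd 1))
  map_act' := by
    rintro (_ | _) (_ | _) <;> exact (mul_inv_cancel_comm _ _).symm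

@[simp]
theorem degree_x (i : ZMod n) : degree (x i : UQ n m) = (.ofAdd 1, 1) :=
  rfl

@[simp]
theorem degree_y (r : ZMod m) : degree (y r : UQ n m) = (1, .ofAdd 1) :=
  rfl

end UQ

theorem envelGroup_U_eq_ZxZ (n m : ℕ) (h : Nat.Coprime n m) :
    Nonempty (Rack.EnvelGroup (UQ n m) ≃* Multiplicative (ℤ × ℤ)) := by
  let a : EnvelGroup (UQ n m) := toEnvelGroup _ (UQ.x 0)
  let b : EnvelGroup (UQ n m) := toEnvelGroup _ (UQ.y 0)
  have hab : Commute a b := UQ.commute_map_x_y _ h 0 0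
  let toProd : EnvelGroup (UQ n m) →* Multiplicative ℤ × Multiplicative ℤ :=
    toEnvelGroup.map UQ.degree
  let ofProd : Multiplicative ℤ × Multiplicative ℤ →* EnvelGroup (UQ n m) :=
    (zpowersHom _ a).noncommCoprod (zpowersHom _ b) fun k l => by
      simpa using hab.zpow_zpow k.toAdd l.toAdd
  have left : ofProd.comp toProd = MonoidHom.id _ := by
    refine UQ.envelGroup_hom_ext (fun i => ?_) (fun r => ?_)
    · simpa [ofProd, toProd, a] using (UQ.map_x_eq (toEnvelGroup _) h i).symm
    · simpa [ofProd, toProd, b] using (UQ.map_y_eq (toEnvelGroup _) h r).symm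
  have right : toProd.comp ofProd = MonoidHom.id _ := by
    ext k <;> simp [ofProd, toProd, a, b]
  exact ⟨(toProd.toMulEquiv ofProd left right).trans (MulEquiv.prodMultiplicative ℤ ℤ).symm⟩
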